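/- arXiv:2106.12059 — 4 statements merged into one kernel-verified Lean document; each statement's English description precedes it below -/
import Mathlib

section
/- (Gumbel-max trick) Let s₁, …, sₙ be real numbers and let ε₁, …, εₙ be i.i.d. Gumbel(0, 1) random variables. Then for each index i, the probability that sᵢ + εᵢ is the strict maximum of {s₁ + ε₁, …, sₙ + εₙ} equals exp(sᵢ)/∑ⱼ exp(sⱼ). -/
/-! Condition on `ε i = x`. By independence, the other `n - 1` events `ε j < x + s i - s j` have
joint probability `∏ j ≠ i, exp (-exp (-(x + s i - s j))) = exp (-k * exp (-x))` with
`k = ∑ j ≠ i, exp (s j - s i)`. Integrating against the Gumbel density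
`exp (-x) * exp (-exp (-x))` leaves `∫ exp (-x) * exp (-(1 + k) * exp (-x)) dx = 1 / (1 + k)`,
which is the softmax weight. -/

open MeasureTheory

/-- `G` is Gumbel distributed with location `μ` and scale `β` under `P`. -/
def IsGumbel {Ω : Type*} [MeasurableSpace Ω] (P : Measure Ω) (G : Ω → ℝ) (μ β : ℝ) : Prop :=
  ∀ g : ℝ, P {ω | G ω ≤ g} = ENNReal.ofReal (Real.exp (-Real.exp (-(g - μ) / β)))

open ProbabilityTheory Real Filter Set Topology

section GumbelIntegral

variable {a : ℝ}

lemma hasDerivAt_exp_neg_mul_exp_neg_div (ha : a ≠ 0) (x : ℝ) :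
    HasDerivAt (fun y ↦ exp (-a * exp (-y)) / a) (exp (-x) * exp (-a * exp (-x))) x := by
  refine (((hasDerivAt_neg x).exp.const_mul (-a)).exp.div_const a).congr_deriv ?_
  field_simp

lemma tendsto_exp_neg_mul_exp_neg_div_atBot (ha : 0 < a) :
    Tendsto (fun y ↦ exp (-a * exp (-y)) / a) atBot (𝓝 0) := by
  have h : Tendsto (fun y ↦ -a * exp (-y)) atBot atBot :=
    (tendsto_exp_atTop.comp tendsto_neg_atBot_atTop).const_mul_atTop_of_neg (by linarith)
  simpa using (tendsto_exp_atBot.comp h).div_const a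

lemma tendsto_exp_neg_mul_exp_neg_div_atTop :
    Tendsto (fun y ↦ exp (-a * exp (-y)) / a) atTop (𝓝 a⁻¹) := by
  have h : Tendsto (fun y ↦ -a * exp (-y)) atTop (𝓝 0) := by
    simpa using (tendsto_exp_atBot.comp tendsto_neg_atTop_atBot).const_mul (-a)
  simpa using ((continuous_exp.tendsto 0).comp h).div_const a

lemma integrable_exp_neg_mul_exp_neg_mul_exp (ha : 0 < a) :
    Integrable (fun x ↦ exp (-x) * exp (-a * exp (-x))) := by
  have hcont : Continuous fun x ↦ exp (-x) * exp (-a * exp (-x)) := by fun_prop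
  refine integrable_of_intervalIntegral_norm_bounded a⁻¹ (fun r ↦ hcont.integrableOn_Ioc)
    tendsto_neg_atTop_atBot tendsto_id (.of_forall fun r ↦ ?_)
  have h_upper : exp (-a * exp (-r)) ≤ 1 := exp_le_one_iff.mpr (by nlinarith [exp_pos (-r)])
  have h_lower : 0 < exp (-a * exp (-(-r))) := exp_pos _
  simp_rw [Real.norm_of_nonneg (by positivity : 0 ≤ exp (-_) * exp (-a * exp (-_)))]
  rw [intervalIntegral.integral_eq_sub_of_hasDerivAt
    (fun x _ ↦ hasDerivAt_exp_neg_mul_exp_neg_div ha.ne' x) (hcont.intervalIntegrable _ _),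
    id, div_sub_div_same, div_le_iff₀ ha, inv_mul_cancel₀ ha.ne']
  linarith

lemma integral_exp_neg_mul_exp_neg_mul_exp (ha : 0 < a) :
    ∫ x, exp (-x) * exp (-a * exp (-x)) = a⁻¹ := by
  simpa using integral_of_hasDerivAt_of_tendsto (hasDerivAt_exp_neg_mul_exp_neg_div ha.ne')
    (integrable_exp_neg_mul_exp_neg_mul_exp ha) (tendsto_exp_neg_mul_exp_neg_div_atBot ha)
    tendsto_exp_neg_mul_exp_neg_div_atTop

end GumbelIntegral

noncomputable def stdGumbelMeasure : Measure ℝ :=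
  volume.withDensity fun x ↦ ENNReal.ofReal (exp (-x) * exp (-exp (-x)))

lemma integrable_exp_neg_mul_exp_neg_exp :
    Integrable fun x : ℝ ↦ exp (-x) * exp (-exp (-x)) := by
  simpa using integrable_exp_neg_mul_exp_neg_mul_exp one_pos

instance : IsFiniteMeasure stdGumbelMeasure :=
  isFiniteMeasure_withDensity_ofReal integrable_exp_neg_mul_exp_neg_exp.hasFiniteIntegral

instance : NullSingletonClass stdGumbelMeasure := by
  unfold stdGumbelMeasure
  infer_instance

lemma lintegral_stdGumbelMeasure_exp_neg_mul_exp {k : ℝ} (hk : -1 < k) :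
    ∫⁻ x, ENNReal.ofReal (exp (-(k * exp (-x)))) ∂stdGumbelMeasure =
      ENNReal.ofReal (1 + k)⁻¹ := by
  have h1k : 0 < 1 + k := by linarith
  rw [stdGumbelMeasure, lintegral_withDensity_eq_lintegral_mul₀ (by fun_prop) (by fun_prop)]
  have h_mul (x : ℝ) : ENNReal.ofReal (exp (-x) * exp (-exp (-x))) *
      ENNReal.ofReal (exp (-(k * exp (-x)))) =
        ENNReal.ofReal (exp (-x) * exp (-(1 + k) * exp (-x))) := by
    rw [← ENNReal.ofReal_mul (by positivity), mul_assoc, ← exp_add]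
    ring_nf
  simp_rw [Pi.mul_apply, h_mul]
  rw [← ofReal_integral_eq_lintegral_ofReal (integrable_exp_neg_mul_exp_neg_mul_exp h1k)
    (.of_forall fun x ↦ by positivity), integral_exp_neg_mul_exp_neg_mul_exp h1k]

lemma stdGumbelMeasure_Iic (t : ℝ) :
    stdGumbelMeasure (Iic t) = ENNReal.ofReal (exp (-exp (-t))) := by
  rw [stdGumbelMeasure, withDensity_apply _ measurableSet_Iic,
    ← ofReal_integral_eq_lintegral_ofReal
    integrable_exp_neg_mul_exp_neg_exp.integrableOn (.of_forall fun x ↦ by positivity)]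
  congr 1
  simpa using integral_Iic_of_hasDerivAt_of_tendsto' (a := t)
    (fun x _ ↦ hasDerivAt_exp_neg_mul_exp_neg_div one_ne_zero x)
    (integrable_exp_neg_mul_exp_neg_mul_exp one_pos).integrableOn
    (tendsto_exp_neg_mul_exp_neg_div_atBot one_pos)

lemma stdGumbelMeasure_Iio (t : ℝ) :
    stdGumbelMeasure (Iio t) = ENNReal.ofReal (exp (-exp (-t))) := by
  rw [measure_congr Iio_ae_eq_Iic, stdGumbelMeasure_Iic]

section

variable {Ω : Type*} [MeasurableSpace Ω] {P : Measure Ω} {X : Ω → ℝ}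

lemma IsGumbel.map_eq_stdGumbelMeasure [IsFiniteMeasure P] (hX : Measurable X)
    (h : IsGumbel P X 0 1) :
    P.map X = stdGumbelMeasure :=
  Measure.ext_of_Iic _ _ fun t ↦ by
    rw [Measure.map_apply hX measurableSet_Iic, stdGumbelMeasure_Iic]
    exact (h t).trans (by simp)

lemma IsGumbel.measure_preimage_Iio [IsFiniteMeasure P] (hX : Measurable X)
    (h : IsGumbel P X 0 1) (t : ℝ) :
    P (X ⁻¹' Iio t) = ENNReal.ofReal (exp (-exp (-t))) := by
  rw [← Measure.map_apply hX measurableSet_Iio, h.map_eq_stdGumbelMeasure hX,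
    stdGumbelMeasure_Iio]

namespace ProbabilityTheory

lemma IndepFun.measure_mk_mem_eq_lintegral {α β : Type*} [MeasurableSpace α] [MeasurableSpace β]
    [IsFiniteMeasure P] {X : Ω → α} {Y : Ω → β} (hX : Measurable X) (hY : Measurable Y)
    (h : IndepFun X Y P) {B : Set (α × β)} (hB : MeasurableSet B) :
    P {ω | (X ω, Y ω) ∈ B} = ∫⁻ x, P {ω | (x, Y ω) ∈ B} ∂(P.map X) := by
  change P ((fun ω ↦ (X ω, Y ω)) ⁻¹' B) = _
  rw [← Measure.map_apply (hX.prodMk hY) hB, h.map_prod_eq_prod_map_map hX.aemeasurable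
    hY.aemeasurable, Measure.prod_apply hB]
  simp_rw [Measure.map_apply hY (measurable_prodMk_left hB)]
  rfl

lemma iIndepFun.indepFun_finset_of_notMem {ι β : Type*} [MeasurableSpace β]
    {f : ι → Ω → β} (h : iIndepFun f P) (hmeas : ∀ j, Measurable (f j)) {T : Finset ι}
    {i : ι} (hi : i ∉ T) : IndepFun (f i) (fun ω (j : T) ↦ f j ω) P := by
  classical
  exact (h.indepFun_finset {i} T (Finset.disjoint_singleton_left.mpr hi) hmeas).comp
    (measurable_pi_apply (⟨i, Finset.mem_singleton_self i⟩ : ({i} : Finset ι))) measurable_id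

lemma iIndepFun.measure_forall_lt_of_isGumbel {ι : Type*} [IsFiniteMeasure P]
    {ε : ι → Ω → ℝ} (hmeas : ∀ j, Measurable (ε j)) (hindep : iIndepFun ε P)
    (hgumbel : ∀ j, IsGumbel P (ε j) 0 1) (T : Finset ι) (c : ι → ℝ) :
    P {ω | ∀ j ∈ T, ε j ω < c j} = ENNReal.ofReal (exp (-∑ j ∈ T, exp (-c j))) := by
  have hset : {ω | ∀ j ∈ T, ε j ω < c j} = ⋂ j ∈ T, ε j ⁻¹' Iio (c j) := by ext; simp
  rw [hset, hindep.measure_inter_preimage_eq_mul T fun j _ ↦ measurableSet_Iio,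
    Finset.prod_congr rfl fun j _ ↦ (hgumbel j).measure_preimage_Iio (hmeas j) (c j),
    ← ENNReal.ofReal_prod_of_nonneg fun j _ ↦ (exp_pos _).le, ← exp_sum,
    Finset.sum_neg_distrib]

lemma iIndepFun.measure_forall_add_lt_add_of_isGumbel {ι : Type*} [IsFiniteMeasure P]
    {ε : ι → Ω → ℝ} (hmeas : ∀ j, Measurable (ε j)) (hindep : iIndepFun ε P)
    (hgumbel : ∀ j, IsGumbel P (ε j) 0 1) (s : ι → ℝ) (T : Finset ι) (i : ι) (x : ℝ) :
    P {ω | ∀ j ∈ T, s j + ε j ω < s i + x} =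
      ENNReal.ofReal (exp (-((∑ j ∈ T, exp (s j - s i)) * exp (-x)))) := by
  have hset : {ω | ∀ j ∈ T, s j + ε j ω < s i + x} =
      {ω | ∀ j ∈ T, ε j ω < s i - s j + x} := by
    ext ω
    exact forall₂_congr fun j _ ↦ by constructor <;> intro h <;> linarith
  rw [hset, hindep.measure_forall_lt_of_isGumbel hmeas hgumbel, Finset.sum_mul]
  congr 4 with j
  rw [← exp_add]
  ring_nf

end ProbabilityTheory

end

lemma exp_div_sum_exp_eq_inv {ι : Type*} [Fintype ι] [DecidableEq ι] (s : ι → ℝ) (i : ι) :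
    exp (s i) / ∑ j, exp (s j) = (1 + ∑ j ∈ Finset.univ.erase i, exp (s j - s i))⁻¹ := by
  rw [← Finset.add_sum_erase _ _ (Finset.mem_univ i)]
  simp_rw [exp_sub, ← Finset.sum_div]
  field_simp

theorem gumbel_max_trick {Ω : Type*} [MeasurableSpace Ω] (P : Measure Ω)
    [IsProbabilityMeasure P] (n : ℕ) (s : Fin n → ℝ) (ε : Fin n → Ω → ℝ)
    (hmeas : ∀ i, Measurable (ε i))
    (hindep : ProbabilityTheory.iIndepFun ε P)
    (hgumbel : ∀ i, IsGumbel P (ε i) 0 1) (i : Fin n) :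
    P {ω | ∀ j, j ≠ i → s j + ε j ω < s i + ε i ω} =
      ENNReal.ofReal (Real.exp (s i) / ∑ j, Real.exp (s j)) := by
  classical
  set T := Finset.univ.erase i
  set k := ∑ j ∈ T, exp (s j - s i)
  let B : Set (ℝ × (T → ℝ)) := {p | ∀ j : T, s j + p.2 j < s i + p.1}
  have hB : MeasurableSet B := by
    simp only [B, ofPred_forall]
    exact .iInter fun j ↦ measurableSet_lt (by fun_prop) (by fun_prop)
  have h_section (x : ℝ) :
      P {ω | (x, fun j : T ↦ ε j ω) ∈ B} = ENNReal.ofReal (exp (-(k * exp (-x)))) := by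
    simpa [B] using hindep.measure_forall_add_lt_add_of_isGumbel hmeas hgumbel s T i x
  calc P {ω | ∀ j, j ≠ i → s j + ε j ω < s i + ε i ω}
      = P {ω | (ε i ω, fun j : T ↦ ε j ω) ∈ B} := by
        congr 1; ext ω; simp [B, T]
    _ = ∫⁻ x, ENNReal.ofReal (exp (-(k * exp (-x)))) ∂stdGumbelMeasure := by
        rw [(hindep.indepFun_finset_of_notMem hmeas (Finset.notMem_erase i _)
          ).measure_mk_mem_eq_lintegral (hmeas i) (by fun_prop) hB,
          (hgumbel i).map_eq_stdGumbelMeasure (hmeas i)]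
        exact lintegral_congr h_section
    _ = ENNReal.ofReal (exp (s i) / ∑ j, exp (s j)) := by
        have hk : -1 < k := by linarith [show 0 ≤ k by positivity]
        rw [lintegral_stdGumbelMeasure_exp_neg_mul_exp hk, exp_div_sum_exp_eq_inv]
end

section
/- (Gumbel-max trick with coldness) Let s₁, …, sₙ be real numbers, β > 0, and ε₁, …, εₙ i.i.d. Gumbel(0, β⁻¹). Then for each index i, the probability that sᵢ + εᵢ is the strict maximum of {sⱼ + εⱼ}ⱼ equals exp(β sᵢ)/∑ⱼ exp(β sⱼ). -/
/-!
Write `F_a(t) = exp (-a e^{-βt})`; the Gumbel(0, β⁻¹) CDF is `F_1`, and `F_a F_b = F_{a+b}`.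
Conditioning on `εᵢ = t`, the event is `εⱼ < sᵢ - sⱼ + t` for all `j ≠ i`, which by independence
has probability `∏_{j ≠ i} F_1(t + sᵢ - sⱼ) = F_b(t)` with `b = ∑_{j ≠ i} e^{β(sⱼ - sᵢ)}`.
Against the density `F_1' = β e^{-βt} F_1` this integrates to `1 / (1 + b)`, because
`F_1' F_b = F_{1+b}' / (1 + b)` and `F_{1+b}'` is a probability density.
-/

open MeasureTheory

open Real Set Filter Topology

theorem integrable_deriv_of_nonneg {g g' : ℝ → ℝ} {l m : ℝ}
    (hderiv : ∀ x, HasDerivAt g (g' x) x) (hg' : ∀ x, 0 ≤ g' x)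
    (hbot : Tendsto g atBot (𝓝 l)) (htop : Tendsto g atTop (𝓝 m)) : Integrable g' := by
  have hint : ∀ a b, IntervalIntegrable g' volume a b := fun a b =>
    intervalIntegral.intervalIntegrable_deriv_of_nonneg
      (fun x _ => (hderiv x).continuousAt.continuousWithinAt) (fun x _ => hderiv x)
      (fun x _ => hg' x)
  refine integrable_of_intervalIntegral_norm_tendsto (m - l) (fun x => (hint (-x) x).1)
    tendsto_neg_atTop_atBot tendsto_id ?_
  simp_rw [Real.norm_of_nonneg (hg' _)]
  refine (htop.sub (hbot.comp tendsto_neg_atTop_atBot)).congr fun x => ?_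
  exact (intervalIntegral.integral_eq_sub_of_hasDerivAt (fun y _ => hderiv y) (hint _ _)).symm

lemma exp_mul_div_sum_exp_mul {m : ℕ} (β : ℝ) (s : Fin (m + 1) → ℝ) (i : Fin (m + 1)) :
    exp (β * s i) / ∑ j, exp (β * s j) =
      1 / (1 + ∑ j : Fin m, exp (-(β * (s i - s (i.succAbove j))))) := by
  have hshift : ∀ j, exp (-(β * (s i - s j))) = exp (β * s j) / exp (β * s i) := fun j => by
    rw [← exp_sub]; ring_nf
  simp only [hshift, ← Finset.sum_div, Fin.sum_univ_succAbove _ i]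
  field_simp

namespace ProbabilityTheory

-- `a = exp (β μ)` for the location `μ`: maxima of independent Gumbel variables add this parameter.
noncomputable def gumbelCDF (β a t : ℝ) : ℝ := exp (-(a * exp (-(β * t))))

noncomputable def gumbelPDF (β a t : ℝ) : ℝ := a * β * exp (-(β * t)) * gumbelCDF β a t

variable {β a b : ℝ}

lemma gumbelCDF_nonneg (β a t : ℝ) : 0 ≤ gumbelCDF β a t := (exp_pos _).le

lemma gumbelPDF_nonneg (hβ : 0 ≤ β) (ha : 0 ≤ a) (t : ℝ) : 0 ≤ gumbelPDF β a t := by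
  unfold gumbelPDF gumbelCDF; positivity

lemma continuous_gumbelCDF (β a : ℝ) : Continuous (gumbelCDF β a) := by
  unfold gumbelCDF; fun_prop

lemma continuous_gumbelPDF (β a : ℝ) : Continuous (gumbelPDF β a) := by
  unfold gumbelPDF gumbelCDF; fun_prop

lemma hasDerivAt_gumbelCDF (β a t : ℝ) : HasDerivAt (gumbelCDF β a) (gumbelPDF β a t) t := by
  have h : HasDerivAt (fun t => -(β * t)) (-β) t := by
    simpa using ((hasDerivAt_id t).const_mul β).fun_neg
  exact (h.exp.const_mul a).fun_neg.exp.congr_deriv (by unfold gumbelPDF gumbelCDF; ring)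

lemma tendsto_gumbelCDF_atTop (hβ : 0 < β) (a : ℝ) : Tendsto (gumbelCDF β a) atTop (𝓝 1) := by
  have h : Tendsto (fun t => exp (-(β * t))) atTop (𝓝 0) :=
    tendsto_exp_atBot.comp (tendsto_neg_atTop_atBot.comp (tendsto_id.const_mul_atTop hβ))
  unfold gumbelCDF
  simpa [Function.comp_def] using (continuous_exp.tendsto _).comp (h.const_mul a).neg

lemma tendsto_gumbelCDF_atBot (hβ : 0 < β) (ha : 0 < a) :
    Tendsto (gumbelCDF β a) atBot (𝓝 0) := by
  have h : Tendsto (fun t => exp (-(β * t))) atBot atTop :=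
    tendsto_exp_atTop.comp (tendsto_neg_atBot_atTop.comp (tendsto_id.const_mul_atBot hβ))
  exact tendsto_exp_atBot.comp (tendsto_neg_atTop_atBot.comp (h.const_mul_atTop ha))

lemma integrable_gumbelPDF (hβ : 0 < β) (ha : 0 < a) : Integrable (gumbelPDF β a) :=
  integrable_deriv_of_nonneg (hasDerivAt_gumbelCDF β a) (gumbelPDF_nonneg hβ.le ha.le)
    (tendsto_gumbelCDF_atBot hβ ha) (tendsto_gumbelCDF_atTop hβ a)

lemma integral_gumbelPDF (hβ : 0 < β) (ha : 0 < a) : ∫ t, gumbelPDF β a t = 1 := by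
  simpa using integral_of_hasDerivAt_of_tendsto (hasDerivAt_gumbelCDF β a)
    (integrable_gumbelPDF hβ ha) (tendsto_gumbelCDF_atBot hβ ha) (tendsto_gumbelCDF_atTop hβ a)

lemma integral_Iic_gumbelPDF (hβ : 0 < β) (ha : 0 < a) (x : ℝ) :
    ∫ t in Iic x, gumbelPDF β a t = gumbelCDF β a x := by
  simpa using integral_Iic_of_hasDerivAt_of_tendsto' (fun t _ => hasDerivAt_gumbelCDF β a t)
    (integrable_gumbelPDF hβ ha).integrableOn (tendsto_gumbelCDF_atBot hβ ha)

lemma gumbelCDF_add (β a t c : ℝ) :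
    gumbelCDF β a (t + c) = gumbelCDF β (a * exp (-(β * c))) t := by
  simp only [gumbelCDF, mul_assoc, ← exp_add]
  ring_nf

lemma prod_gumbelCDF {ι : Type*} (s : Finset ι) (a : ι → ℝ) (t : ℝ) :
    ∏ j ∈ s, gumbelCDF β (a j) t = gumbelCDF β (∑ j ∈ s, a j) t := by
  simp only [gumbelCDF, ← exp_sum, Finset.sum_mul, Finset.sum_neg_distrib]

lemma gumbelPDF_mul_gumbelCDF (hab : a + b ≠ 0) (t : ℝ) :
    gumbelPDF β a t * gumbelCDF β b t = a / (a + b) * gumbelPDF β (a + b) t := by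
  simp only [gumbelPDF, gumbelCDF, mul_assoc, ← exp_add]
  field_simp
  ring_nf

noncomputable def gumbelMeasure (β a : ℝ) : Measure ℝ :=
  volume.withDensity fun t => ENNReal.ofReal (gumbelPDF β a t)

lemma measurable_ofReal_gumbelPDF (β a : ℝ) :
    Measurable fun t => ENNReal.ofReal (gumbelPDF β a t) :=
  (continuous_gumbelPDF β a).measurable.ennreal_ofReal

lemma lintegral_gumbelMeasure (hβ : 0 < β) (ha : 0 < a) {f : ℝ → ℝ} (hf : Continuous f) :
    ∫⁻ t, ENNReal.ofReal (f t) ∂gumbelMeasure β a =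
      ∫⁻ t, ENNReal.ofReal (gumbelPDF β a t * f t) := by
  rw [gumbelMeasure, lintegral_withDensity_eq_lintegral_mul _ (measurable_ofReal_gumbelPDF β a)
    hf.measurable.ennreal_ofReal]
  simp only [Pi.mul_apply, ← ENNReal.ofReal_mul (gumbelPDF_nonneg hβ.le ha.le _)]

lemma gumbelMeasure_Iic (hβ : 0 < β) (ha : 0 < a) (x : ℝ) :
    gumbelMeasure β a (Iic x) = ENNReal.ofReal (gumbelCDF β a x) := by
  rw [gumbelMeasure, withDensity_apply _ measurableSet_Iic, ← integral_Iic_gumbelPDF hβ ha,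
    ofReal_integral_eq_lintegral_ofReal (integrable_gumbelPDF hβ ha).integrableOn
      (ae_of_all _ (gumbelPDF_nonneg hβ.le ha.le))]

lemma gumbelMeasure_Iio (hβ : 0 < β) (ha : 0 < a) (x : ℝ) :
    gumbelMeasure β a (Iio x) = ENNReal.ofReal (gumbelCDF β a x) := by
  rw [gumbelMeasure, withDensity_apply _ measurableSet_Iio, setLIntegral_congr Iio_ae_eq_Iic,
    ← withDensity_apply _ measurableSet_Iic, ← gumbelMeasure, gumbelMeasure_Iic hβ ha]

lemma isProbabilityMeasure_gumbelMeasure (hβ : 0 < β) (ha : 0 < a) :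
    IsProbabilityMeasure (gumbelMeasure β a) := by
  constructor
  rw [gumbelMeasure, withDensity_apply _ MeasurableSet.univ, Measure.restrict_univ,
    ← ofReal_integral_eq_lintegral_ofReal (integrable_gumbelPDF hβ ha)
      (ae_of_all _ (gumbelPDF_nonneg hβ.le ha.le)), integral_gumbelPDF hβ ha, ENNReal.ofReal_one]

-- `P(G' < G) = a / (a + b)` for independent `G ∼ gumbelMeasure β a`, `G' ∼ gumbelMeasure β b`.
lemma lintegral_gumbelCDF_gumbelMeasure (hβ : 0 < β) (ha : 0 < a) (hb : 0 ≤ b) :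
    ∫⁻ t, ENNReal.ofReal (gumbelCDF β b t) ∂gumbelMeasure β a = ENNReal.ofReal (a / (a + b)) := by
  have hab : 0 < a + b := by linarith
  simp_rw [lintegral_gumbelMeasure hβ ha (continuous_gumbelCDF β b),
    gumbelPDF_mul_gumbelCDF hab.ne', ENNReal.ofReal_mul (div_pos ha hab).le]
  rw [lintegral_const_mul _ (measurable_ofReal_gumbelPDF β _),
    ← ofReal_integral_eq_lintegral_ofReal (integrable_gumbelPDF hβ hab)
      (ae_of_all _ (gumbelPDF_nonneg hβ.le hab.le)), integral_gumbelPDF hβ hab, ENNReal.ofReal_one,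
    mul_one]

lemma map_eq_gumbelMeasure_of_isGumbel {Ω : Type*} [MeasurableSpace Ω] {P : Measure Ω}
    [IsProbabilityMeasure P] {X : Ω → ℝ} {μ : ℝ} (hβ : 0 < β) (hX : Measurable X)
    (h : IsGumbel P X μ β⁻¹) : P.map X = gumbelMeasure β (exp (β * μ)) := by
  have := isProbabilityMeasure_gumbelMeasure hβ (exp_pos (β * μ))
  have := Measure.isProbabilityMeasure_map (μ := P) hX.aemeasurable
  refine Measure.ext_of_Iic _ _ fun x => ?_
  rw [Measure.map_apply hX measurableSet_Iic, gumbelMeasure_Iic hβ (exp_pos _)]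
  refine (h x).trans (congrArg ENNReal.ofReal ?_)
  rw [gumbelCDF, ← exp_add]
  field_simp
  ring_nf

lemma measurableSet_forall_ne_add_lt {ι : Type*} [Countable ι] (s : ι → ℝ) (i : ι) :
    MeasurableSet {x : ι → ℝ | ∀ j, j ≠ i → s j + x j < s i + x i} := by
  measurability

lemma measure_pi_forall_ne_add_lt {m : ℕ} (ν : Fin (m + 1) → Measure ℝ) [∀ j, SigmaFinite (ν j)]
    (s : Fin (m + 1) → ℝ) (i : Fin (m + 1)) :
    Measure.pi ν {x | ∀ j, j ≠ i → s j + x j < s i + x i} =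
      ∫⁻ t, ∏ j : Fin m, ν (i.succAbove j) (Iio (t + (s i - s (i.succAbove j)))) ∂ν i := by
  set V : Set (ℝ × (Fin m → ℝ)) := {q | ∀ j, s (i.succAbove j) + q.2 j < s i + q.1}
  have hV : MeasurableSet V := by measurability
  have hpre : {x | ∀ j, j ≠ i → s j + x j < s i + x i} =
      MeasurableEquiv.piFinSuccAbove (fun _ => ℝ) i ⁻¹' V := by
    ext x
    simp only [V, MeasurableEquiv.piFinSuccAbove, mem_preimage]
    exact ⟨fun hx j => hx _ (i.succAbove_ne j),
      fun hx j hj => by obtain ⟨k, rfl⟩ := Fin.exists_succAbove_eq hj; exact hx k⟩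
  have hsection : ∀ t, Prod.mk t ⁻¹' V = univ.pi fun j => Iio (t + (s i - s (i.succAbove j))) := by
    intro t; ext y
    simp only [V, mem_preimage, mem_univ_pi, mem_Iio, mem_ofPred_eq]
    exact forall_congr' fun j => by constructor <;> intro h <;> linarith
  rw [hpre, (measurePreserving_piFinSuccAbove ν i).measure_preimage hV.nullMeasurableSet,
    Measure.prod_apply hV]
  simp only [hsection, Measure.pi_pi]

end ProbabilityTheory


open ProbabilityTheory

theorem gumbel_max_trick_coldness {Ω : Type*} [MeasurableSpace Ω] (P : Measure Ω)
    [IsProbabilityMeasure P] (n : ℕ) (s : Fin n → ℝ) (β : ℝ) (hβ : 0 < β)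
    (ε : Fin n → Ω → ℝ) (hmeas : ∀ i, Measurable (ε i))
    (hindep : ProbabilityTheory.iIndepFun ε P)
    (hgumbel : ∀ i, IsGumbel P (ε i) 0 β⁻¹) (i : Fin n) :
    P {ω | ∀ j, j ≠ i → s j + ε j ω < s i + ε i ω} =
      ENNReal.ofReal (Real.exp (β * s i) / ∑ j, Real.exp (β * s j)) := by
  obtain ⟨m, rfl⟩ : ∃ m, n = m + 1 := ⟨n - 1, by have := i.pos; omega⟩
  have hlaw : ∀ j, P.map (ε j) = gumbelMeasure β 1 := fun j => by
    simpa using map_eq_gumbelMeasure_of_isGumbel hβ (hmeas j) (hgumbel j)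
  have hjoint : P.map (fun ω j => ε j ω) = Measure.pi fun _ => gumbelMeasure β 1 := by
    simp only [hindep.map_fun_eq_pi_map fun j => (hmeas j).aemeasurable, hlaw]
  have := isProbabilityMeasure_gumbelMeasure hβ one_pos
  calc P {ω | ∀ j, j ≠ i → s j + ε j ω < s i + ε i ω}
      = Measure.pi (fun _ => gumbelMeasure β 1) {x | ∀ j, j ≠ i → s j + x j < s i + x i} := by
        rw [← hjoint, Measure.map_apply (measurable_pi_lambda _ hmeas)
          (measurableSet_forall_ne_add_lt s i)]
        rfl
    _ = ∫⁻ t, ∏ j : Fin m, ENNReal.ofReal (gumbelCDF β 1 (t + (s i - s (i.succAbove j))))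
          ∂gumbelMeasure β 1 := by
        simp only [measure_pi_forall_ne_add_lt, gumbelMeasure_Iio hβ one_pos]
    _ = ∫⁻ t, ENNReal.ofReal (gumbelCDF β (∑ j : Fin m, exp (-(β * (s i - s (i.succAbove j))))) t)
          ∂gumbelMeasure β 1 := by
        simp only [← ENNReal.ofReal_prod_of_nonneg fun j _ => gumbelCDF_nonneg β _ _,
          gumbelCDF_add, one_mul, prod_gumbelCDF]
    _ = ENNReal.ofReal (exp (β * s i) / ∑ j, exp (β * s j)) := by
        rw [lintegral_gumbelCDF_gumbelMeasure hβ one_pos (by positivity),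
          exp_mul_div_sum_exp_mul]
end

section
/- Let s₁, …, sₙ be real numbers, β > 0, and ε₁, …, εₙ i.i.d. Gumbel(0, β⁻¹). Then the (ordered) set of indices of the top-k values of {sᵢ + εᵢ} has the same distribution as an ordered sample without replacement of size k from the categorical distribution Categorical(exp(β sᵢ)/∑ⱼ exp(β sⱼ)). -/
open MeasureTheory

/-- `ι : Fin k → Fin n` lists the indices of the `k` largest values of `v`
in decreasing order. -/
def IsArgTopK {n k : ℕ} (v : Fin n → ℝ) (ι : Fin k → Fin n) : Prop :=
  Function.Injective ι ∧
  (∀ j₁ j₂ : Fin k, j₁ < j₂ → v (ι j₂) < v (ι j₁)) ∧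
  (∀ m : Fin n, m ∉ Set.range ι → ∀ j : Fin k, v m < v (ι j))

/-- Probability that an ordered sample without replacement of size `k` from the
categorical distribution with weights `w` equals the ordered list `ι`. -/
noncomputable def orderedSampleWithoutReplacementProb {n k : ℕ} (w : Fin n → ℝ)
    (ι : Fin k → Fin n) : ℝ :=
  ∏ j : Fin k,
    w (ι j) /
      ∑ ℓ ∈ Finset.univ \ (Finset.univ.filter (fun j' : Fin k => j' < j)).image ι, w ℓ

/-!
Put `T i = exp (-β (s i + ε i))`. Then the `T i` are independent exponential variables with
rates `w i = exp (β s i)`, and since `x ↦ exp (-β x)` is decreasing, the arg-top-`k` of `s + ε`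
lists the first `k` arrivals among the exponential clocks `T`. The probability that clocks
`ι 0, …, ι (k-1)` ring first, in this order and all after time `u`, is computed by induction on
`k`, conditioning on the time `x` at which `ι 0` rings: the other clocks must ring after `x`, and
integrating `w₀ e^{-w₀ x}` against their survival probability `e^{-W' x}` produces the factor
`w₀ / (w₀ + W')` times the survival probability `e^{-(w₀ + W') u}` of all clocks.
-/

open ProbabilityTheory Real Set
open scoped ENNReal

instance (r : ℝ) : NullSingletonClass (expMeasure r) :=
  inferInstanceAs (NullSingletonClass (volume.withDensity _))

theorem setLIntegral_Ioi_exp_neg_mul_expMeasure {r a u : ℝ} (hr : 0 < r) (ha : 0 ≤ a)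
    (hu : 0 ≤ u) :
    ∫⁻ x in Ioi u, ENNReal.ofReal (exp (-(a * x))) ∂expMeasure r =
      ENNReal.ofReal (r / (r + a) * exp (-((r + a) * u))) := by
  have hra : -(r + a) < 0 := by linarith
  have density : ∀ x ∈ Ioi u, (exponentialPDF r * fun x => ENNReal.ofReal (exp (-(a * x)))) x =
      ENNReal.ofReal (r * exp (-(r + a) * x)) := fun x hx => by
    rw [Pi.mul_apply, exponentialPDF_of_nonneg (hu.trans hx.le),
      ← ENNReal.ofReal_mul (by positivity), mul_assoc, ← exp_add]
    ring_nf
  rw [show expMeasure r = volume.withDensity (exponentialPDF r) from rfl,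
    restrict_withDensity measurableSet_Ioi, lintegral_withDensity_eq_lintegral_mul _
      (show Measurable (exponentialPDF r) from (measurable_exponentialPDFReal r).ennreal_ofReal)
      (by fun_prop),
    setLIntegral_congr_fun measurableSet_Ioi density,
    ← ofReal_integral_eq_lintegral_ofReal ((integrableOn_exp_mul_Ioi hra u).const_mul r)
      (.of_forall fun x => by positivity),
    integral_const_mul, integral_exp_mul_Ioi hra]
  congr 1
  field_simp

theorem expMeasure_Ioi {r u : ℝ} (hr : 0 < r) (hu : 0 ≤ u) :
    expMeasure r (Ioi u) = ENNReal.ofReal (exp (-(r * u))) := by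
  simpa [div_self hr.ne'] using setLIntegral_Ioi_exp_neg_mul_expMeasure hr le_rfl hu (a := 0)

theorem IsGumbel.map_exp_neg_mul {Ω : Type*} [MeasurableSpace Ω] {P : Measure Ω}
    [IsProbabilityMeasure P] {G : Ω → ℝ} {β : ℝ} (hG : IsGumbel P G 0 β⁻¹) (hGm : Measurable G)
    (hβ : 0 < β) (c : ℝ) :
    P.map (fun ω => exp (-(β * (c + G ω)))) = expMeasure (exp (β * c)) := by
  have hr : 0 < exp (β * c) := exp_pos _
  have := isProbabilityMeasure_expMeasure hr
  refine Measure.ext_of_Ici _ _ fun a => ?_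
  rw [Measure.map_apply (by fun_prop) measurableSet_Ici]
  rcases le_or_gt a 0 with ha | ha
  · have hall : (fun ω => exp (-(β * (c + G ω)))) ⁻¹' Ici a = univ :=
      eq_univ_of_forall fun ω => ha.trans (exp_pos _).le
    rw [hall, measure_univ]
    refine le_antisymm ?_ prob_le_one
    calc (1 : ℝ≥0∞) = expMeasure (exp (β * c)) (Ioi 0) := by simp [expMeasure_Ioi hr le_rfl]
      _ ≤ expMeasure (exp (β * c)) (Ici a) := measure_mono (Ioi_subset_Ici ha)
  · have hpre : (fun ω => exp (-(β * (c + G ω)))) ⁻¹' Ici a = {ω | G ω ≤ -log a / β - c} := by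
      ext ω
      rw [mem_preimage, mem_Ici, ← log_le_iff_le_exp ha, mem_ofPred_eq, le_sub_iff_add_le,
        le_div_iff₀ hβ]
      constructor <;> intro h <;> linarith
    rw [hpre, hG, measure_congr Ioi_ae_eq_Ici.symm, expMeasure_Ioi hr ha.le]
    congr 2
    rw [sub_zero, div_inv_eq_mul, neg_inj,
      show -(-log a / β - c) * β = log a + β * c by field_simp; ring, exp_add, exp_log ha, mul_comm]

theorem MeasureTheory.Measure.pi_eq_lintegral_insertNth {n : ℕ} {α : Fin (n + 1) → Type*}
    [∀ i, MeasurableSpace (α i)] (μ : ∀ i, Measure (α i)) [∀ i, SigmaFinite (μ i)]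
    (i : Fin (n + 1)) {A : Set (∀ j, α j)} (hA : MeasurableSet A) :
    Measure.pi μ A =
      ∫⁻ x, Measure.pi (fun j => μ (i.succAbove j)) {y | Fin.insertNth i x y ∈ A} ∂μ i := by
  rw [← (measurePreserving_piFinSuccAbove μ i).symm.measure_preimage hA.nullMeasurableSet,
    Measure.prod_apply ((MeasurableEquiv.piFinSuccAbove α i).symm.measurable hA)]
  rfl

theorem Fin.exists_eq_cons_succAbove_comp {n k : ℕ} {ι : Fin (k + 1) → Fin (n + 1)}
    (hι : Function.Injective ι) :
    ∃ (i₀ : Fin (n + 1)) (ι' : Fin k → Fin n), ι = Fin.cons i₀ (i₀.succAbove ∘ ι') := by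
  choose ι' hι' using fun j => Fin.exists_succAbove_eq (hι.ne (Fin.succ_ne_zero j))
  exact ⟨ι 0, ι', by rw [← Fin.cons_self_tail ι]; congr; exact funext fun j => (hι' j).symm⟩

section

variable {n k : ℕ}

theorem measurableSet_isArgTopK (ι : Fin k → Fin n) :
    MeasurableSet {v : Fin n → ℝ | IsArgTopK v ι} := by
  simp only [IsArgTopK, ofPred_and]
  refine .inter (.const _) (.inter ?_ ?_) <;>
  · simp only [ofPred_forall]
    exact .iInter fun _ => .iInter fun _ => .iInter fun _ =>
      measurableSet_lt (measurable_pi_apply _) (measurable_pi_apply _)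

theorem isArgTopK_comp_iff {f : ℝ → ℝ} (hf : StrictMono f) (v : Fin n → ℝ) (ι : Fin k → Fin n) :
    IsArgTopK (f ∘ v) ι ↔ IsArgTopK v ι := by
  simp only [IsArgTopK, Function.comp_apply, hf.lt_iff_lt]

theorem isArgTopK_insertNth_cons_iff (i₀ : Fin (n + 1)) (ι : Fin k → Fin n) (x : ℝ)
    (y : Fin n → ℝ) :
    IsArgTopK (Fin.insertNth i₀ x y) (Fin.cons i₀ (i₀.succAbove ∘ ι) : Fin (k + 1) → Fin (n + 1))
      ↔ (∀ m, y m < x) ∧ IsArgTopK y ι := by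
  have below_x : (∀ m, y m < x) ↔ (∀ j, y (ι j) < x) ∧ ∀ m ∉ range ι, y m < x := by
    refine ⟨fun h => ⟨fun j => h _, fun m _ => h m⟩, fun ⟨h₁, h₂⟩ m => ?_⟩
    by_cases hm : m ∈ range ι
    · obtain ⟨j, rfl⟩ := hm
      exact h₁ j
    · exact h₂ m hm
  simp only [IsArgTopK, i₀.forall_iff_succAbove, below_x]
  simp [Fin.forall_fin_succ, Fin.cons_injective_iff, Fin.range_cons, range_comp,
    i₀.succAbove_right_injective.of_comp_iff, forall_and, and_assoc, and_left_comm]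

theorem orderedSampleWithoutReplacementProb_cons (w : Fin (n + 1) → ℝ) (i₀ : Fin (n + 1))
    (ι : Fin k → Fin n) :
    orderedSampleWithoutReplacementProb w
        (Fin.cons i₀ (i₀.succAbove ∘ ι) : Fin (k + 1) → Fin (n + 1)) =
      w i₀ / (∑ i, w i) * orderedSampleWithoutReplacementProb (w ∘ i₀.succAbove) ι := by
  have remaining (j : Fin k) :
      Finset.univ \ (Finset.univ.filter (· < j.succ)).image
          (Fin.cons i₀ (i₀.succAbove ∘ ι) : Fin (k + 1) → Fin (n + 1)) =
        (Finset.univ \ (Finset.univ.filter (· < j)).image ι).image i₀.succAbove := by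
    ext ℓ
    cases ℓ using Fin.succAboveCases i₀ <;> simp [Fin.exists_fin_succ]
  rw [orderedSampleWithoutReplacementProb, Fin.prod_univ_succ]
  simp only [remaining, Finset.sum_image fun _ _ _ _ h => i₀.succAbove_right_injective h]
  simp [orderedSampleWithoutReplacementProb]

/-- Reading `t` as arrival times: every clock rings after time `u`, and the first `k` clocks to
ring are `ι 0, …, ι (k-1)`, in this order. -/
def raceEvent (ι : Fin k → Fin n) (u : ℝ) : Set (Fin n → ℝ) :=
  {t | (∀ m, u < t m) ∧ IsArgTopK (fun i => -t i) ι}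

theorem measurableSet_raceEvent (ι : Fin k → Fin n) (u : ℝ) : MeasurableSet (raceEvent ι u) := by
  change MeasurableSet ({t : Fin n → ℝ | ∀ m, u < t m} ∩
    (fun (t : Fin n → ℝ) i => -t i) ⁻¹' {v | IsArgTopK v ι})
  refine .inter ?_ ((measurableSet_isArgTopK ι).preimage (by fun_prop))
  simp only [ofPred_forall]
  exact .iInter fun m => measurableSet_lt measurable_const (measurable_pi_apply m)

theorem insertNth_mem_raceEvent_cons_iff (i₀ : Fin (n + 1)) (ι : Fin k → Fin n) (u x : ℝ)
    (y : Fin n → ℝ) :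
    Fin.insertNth i₀ x y ∈ raceEvent (Fin.cons i₀ (i₀.succAbove ∘ ι) : Fin (k + 1) → Fin (n + 1)) u
      ↔ u < x ∧ y ∈ raceEvent ι x := by
  have neg_insertNth : (fun i => -(Fin.insertNth i₀ x y : Fin (n + 1) → ℝ) i) =
      Fin.insertNth i₀ (-x) fun m => -y m :=
    funext fun i => by cases i using Fin.succAboveCases i₀ <;> simp
  simp only [raceEvent, mem_ofPred_eq, neg_insertNth, isArgTopK_insertNth_cons_iff, neg_lt_neg_iff,
    i₀.forall_iff_succAbove, Fin.insertNth_apply_same, Fin.insertNth_apply_succAbove]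
  exact ⟨fun ⟨⟨hux, _⟩, hxy, h⟩ => ⟨hux, hxy, h⟩,
    fun ⟨hux, hxy, h⟩ => ⟨⟨hux, fun m => hux.trans (hxy m)⟩, hxy, h⟩⟩

theorem measure_pi_raceEvent (w : Fin n → ℝ) (hw : ∀ i, 0 < w i) (ι : Fin k → Fin n)
    (hι : Function.Injective ι) {u : ℝ} (hu : 0 ≤ u) :
    Measure.pi (fun i => expMeasure (w i)) (raceEvent ι u) =
      ENNReal.ofReal (exp (-((∑ i, w i) * u)) * orderedSampleWithoutReplacementProb w ι) := by
  induction k generalizing n u with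
  | zero =>
    have := fun i => isProbabilityMeasure_expMeasure (hw i)
    have hbox : raceEvent ι u = Set.pi univ fun _ => Ioi u := by
      ext t
      simp [raceEvent, IsArgTopK, Function.injective_of_subsingleton]
    rw [hbox, Measure.pi_pi, Finset.prod_congr rfl fun i _ => expMeasure_Ioi (hw i) hu,
      ← ENNReal.ofReal_prod_of_nonneg fun i _ => (exp_pos _).le, ← exp_sum]
    simp [orderedSampleWithoutReplacementProb, Finset.sum_mul]
  | succ k ih =>
    rcases n with _ | n
    · exact (ι 0).elim0
    have := fun i => isProbabilityMeasure_expMeasure (hw i)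
    obtain ⟨i₀, ι', rfl⟩ := Fin.exists_eq_cons_succAbove_comp hι
    have hι' := (i₀.succAbove_right_injective.of_comp_iff ι').1 (Fin.cons_injective_iff.1 hι).2
    set W' := ∑ m, w (i₀.succAbove m)
    set C' := orderedSampleWithoutReplacementProb (w ∘ i₀.succAbove) ι'
    have slice (x : ℝ) :
        Measure.pi (fun m => expMeasure (w (i₀.succAbove m)))
            {y | Fin.insertNth i₀ x y ∈ raceEvent (Fin.cons i₀ (i₀.succAbove ∘ ι')) u} =
          (Ioi u).indicator (fun x => ENNReal.ofReal (exp (-(W' * x))) * ENNReal.ofReal C') x := by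
      simp only [insertNth_mem_raceEvent_cons_iff]
      by_cases hx : u < x
      · simp only [hx, true_and, ofPred_mem_eq, indicator_of_mem (show x ∈ Ioi u from hx)]
        exact (ih (w ∘ i₀.succAbove) (fun m => hw _) ι' hι' (hu.trans hx.le)).trans
          (ENNReal.ofReal_mul (exp_pos _).le)
      · simp [hx]
    rw [Measure.pi_eq_lintegral_insertNth _ i₀ (measurableSet_raceEvent _ _),
      lintegral_congr slice, lintegral_indicator measurableSet_Ioi,
      lintegral_mul_const' _ _ ENNReal.ofReal_ne_top,
      setLIntegral_Ioi_exp_neg_mul_expMeasure (hw i₀) (Finset.sum_nonneg fun m _ => (hw _).le) hu,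
      orderedSampleWithoutReplacementProb_cons, Fin.sum_univ_succAbove w i₀]
    have hW' : 0 ≤ W' := Finset.sum_nonneg fun m _ => (hw _).le
    have hw₀ := hw i₀
    rw [← ENNReal.ofReal_mul (by positivity)]
    congr 1
    ring

end

theorem gumbel_top_k_coldness_general {Ω : Type*} [MeasurableSpace Ω] (P : Measure Ω)
    (n k : ℕ) (s : Fin n → ℝ) (β : ℝ) (hβ : 0 < β)
    (ε : Fin n → Ω → ℝ) (hmeas : ∀ i, Measurable (ε i))
    (hindep : ProbabilityTheory.iIndepFun ε P)
    (hgumbel : ∀ i, IsGumbel P (ε i) 0 β⁻¹)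
    (ι : Fin k → Fin n) (hι : Function.Injective ι) :
    P {ω | IsArgTopK (fun i => s i + ε i ω) ι} =
      ENNReal.ofReal
        (orderedSampleWithoutReplacementProb (fun i => Real.exp (β * s i)) ι) := by
  have := hindep.isProbabilityMeasure
  have hjoint : P.map (fun ω i => exp (-(β * (s i + ε i ω)))) =
      Measure.pi fun i => expMeasure (exp (β * s i)) :=
    ((hindep.comp _ fun i => (by fun_prop : Measurable fun x => exp (-(β * (s i + x))))
      ).map_fun_eq_pi_map fun i => by fun_prop).trans
      (congrArg Measure.pi (funext fun i => (hgumbel i).map_exp_neg_mul (hmeas i) hβ (s i)))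
  have hevent : {ω | IsArgTopK (fun i => s i + ε i ω) ι} =
      (fun ω i => exp (-(β * (s i + ε i ω)))) ⁻¹' raceEvent ι 0 := by
    have hf : StrictMono fun x => -exp (-(β * x)) := fun x y hxy => by
      simpa using mul_lt_mul_of_pos_left hxy hβ
    ext ω
    simp only [raceEvent, mem_preimage, mem_ofPred_eq, exp_pos, implies_true, true_and]
    exact (isArgTopK_comp_iff hf _ ι).symm
  rw [hevent, ← Measure.map_apply (by fun_prop) (measurableSet_raceEvent ι 0), hjoint,
    measure_pi_raceEvent _ (fun i => exp_pos _) ι hι le_rfl]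
  simp

theorem gumbel_top_k_coldness {Ω : Type*} [MeasurableSpace Ω] (P : Measure Ω)
    [IsProbabilityMeasure P] (n k : ℕ) (hk : k ≤ n) (s : Fin n → ℝ) (β : ℝ) (hβ : 0 < β)
    (ε : Fin n → Ω → ℝ) (hmeas : ∀ i, Measurable (ε i))
    (hindep : ProbabilityTheory.iIndepFun ε P)
    (hgumbel : ∀ i, IsGumbel P (ε i) 0 β⁻¹)
    (ι : Fin k → Fin n) (hι : Function.Injective ι) :
    P {ω | IsArgTopK (fun i => s i + ε i ω) ι} =
      ENNReal.ofReal
        (orderedSampleWithoutReplacementProb (fun i => Real.exp (β * s i)) ι) :=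
  gumbel_top_k_coldness_general P n k s β hβ ε hmeas hindep hgumbel ι hι
end

section
/- In the Gumbel-top-k setting with i.i.d. Gumbel(0,1) perturbations ε₁, …, εₙ of scores s₁, …, sₙ, the event that index i is the overall argmax is independent of the value of the maximum: P(argmax = i ∧ max ≤ m) = (exp(sᵢ)/∑ⱼ exp(sⱼ)) · exp(−exp(−(m − log ∑ⱼ exp(sⱼ)))). -/
/-!
Write `F x = exp (-exp (-x))` for the standard Gumbel CDF and `γ` for its law. By independence `ε` has
law `γ ⊗ ⋯ ⊗ γ`, and given `εᵢ = t` the event asks for `t ≤ m - sᵢ` and `εⱼ < t + sᵢ - sⱼ` for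
`j ≠ i`, of conditional probability `∏ⱼ F (t + sᵢ - sⱼ) = exp (-D e^{-t})` with
`D = ∑_{j ≠ i} e^{sⱼ - sᵢ}`. Against the density `e^{-t} exp (-e^{-t})` of `γ` the integrand becomes
`e^{-t} exp (-C e^{-t})`, `C = 1 + D = (∑ⱼ e^{sⱼ}) / e^{sᵢ}`, whose primitive is
`C⁻¹ exp (-C e^{-t})`, vanishing at `-∞`; its value at `t = m - sᵢ` is the product of the two
factors.
-/

open MeasureTheory

open Filter Set Topology Real

section DerivOnIic

variable {g g' : ℝ → ℝ} {a l : ℝ}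

theorem integrableOn_Iic_deriv_of_nonneg (hderiv : ∀ x ∈ Iic a, HasDerivAt g (g' x) x)
    (g'pos : ∀ x ∈ Iic a, 0 ≤ g' x) (hg : Tendsto g atBot (𝓝 l)) :
    IntegrableOn g' (Iic a) := by
  have hIoc : ∀ x, IntegrableOn g' (Ioc x a) := fun x =>
    intervalIntegral.integrableOn_deriv_of_nonneg
      (fun y hy => (hderiv y hy.2).continuousAt.continuousWithinAt)
      (fun y hy => hderiv y hy.2.le) fun y hy => g'pos y hy.2.le
  refine integrableOn_Iic_of_intervalIntegral_norm_tendsto (g a - l) a hIoc tendsto_id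
    ((hg.const_sub (g a)).congr' ?_)
  filter_upwards [Iic_mem_atBot a] with x hx
  rw [intervalIntegral.integral_of_le hx,
    setIntegral_congr_fun measurableSet_Ioc fun y hy => Real.norm_of_nonneg (g'pos y hy.2),
    ← intervalIntegral.integral_of_le hx,
    intervalIntegral.integral_eq_sub_of_hasDerivAt_of_le hx
      (fun y hy => (hderiv y hy.2).continuousAt.continuousWithinAt)
      (fun y hy => hderiv y hy.2.le)
      ((intervalIntegrable_iff_integrableOn_Ioc_of_le hx).2 (hIoc x))]

theorem lintegral_Iic_deriv_of_nonneg (hderiv : ∀ x ∈ Iic a, HasDerivAt g (g' x) x)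
    (g'pos : ∀ x ∈ Iic a, 0 ≤ g' x) (hg : Tendsto g atBot (𝓝 l)) :
    ∫⁻ x in Iic a, ENNReal.ofReal (g' x) = ENNReal.ofReal (g a - l) := by
  rw [← ofReal_integral_eq_lintegral_ofReal (integrableOn_Iic_deriv_of_nonneg hderiv g'pos hg)
    ((ae_restrict_iff' measurableSet_Iic).2 (.of_forall g'pos)),
    integral_Iic_of_hasDerivAt_of_tendsto' hderiv
      (integrableOn_Iic_deriv_of_nonneg hderiv g'pos hg) hg]

end DerivOnIic

theorem lintegral_Iic_exp_neg_mul_exp_neg_mul_exp_neg {C : ℝ} (hC : 0 < C) (a : ℝ) :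
    ∫⁻ x in Iic a, ENNReal.ofReal (exp (-x) * exp (-(C * exp (-x)))) =
      ENNReal.ofReal (C⁻¹ * exp (-(C * exp (-a)))) := by
  have hderiv (x : ℝ) : HasDerivAt (fun x => C⁻¹ * exp (-(C * exp (-x))))
      (exp (-x) * exp (-(C * exp (-x)))) x := by
    refine ((((((hasDerivAt_neg x).exp).const_mul C).neg).exp).const_mul C⁻¹).congr_deriv ?_
    simp only [Pi.neg_apply]
    field_simp
  have hlim : Tendsto (fun x => C⁻¹ * exp (-(C * exp (-x)))) atBot (𝓝 0) := by
    simpa using (tendsto_exp_atBot.comp <| tendsto_neg_atTop_atBot.comp <|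
      (tendsto_exp_atTop.comp tendsto_neg_atBot_atTop).const_mul_atTop hC).const_mul C⁻¹
  simpa using lintegral_Iic_deriv_of_nonneg (fun x _ => hderiv x) (fun x _ => by positivity) hlim

noncomputable def gumbelPDF (x : ℝ) : ℝ := exp (-x) * exp (-exp (-x))

noncomputable def gumbelMeasure : Measure ℝ :=
  volume.withDensity fun x => ENNReal.ofReal (gumbelPDF x)

instance : NullSingletonClass gumbelMeasure := by
  unfold gumbelMeasure; infer_instance

theorem gumbelMeasure_Iic (g : ℝ) :
    gumbelMeasure (Iic g) = ENNReal.ofReal (exp (-exp (-g))) := by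
  simpa [gumbelMeasure, gumbelPDF, withDensity_apply _ measurableSet_Iic] using
    lintegral_Iic_exp_neg_mul_exp_neg_mul_exp_neg one_pos g

theorem gumbelMeasure_Iio (g : ℝ) :
    gumbelMeasure (Iio g) = ENNReal.ofReal (exp (-exp (-g))) := by
  rw [measure_congr Iio_ae_eq_Iic, gumbelMeasure_Iic]

instance : IsProbabilityMeasure gumbelMeasure := by
  refine ⟨tendsto_nhds_unique (tendsto_measure_Iic_atTop _) ?_⟩
  simp only [gumbelMeasure_Iic]
  simpa [Function.comp_def] using
    (ENNReal.continuous_ofReal.comp continuous_exp).continuousAt.tendsto.comp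
      ((tendsto_exp_atBot.comp tendsto_neg_atTop_atBot).neg)

theorem IsGumbel.map_eq_gumbelMeasure {Ω : Type*} [MeasurableSpace Ω] {P : Measure Ω}
    [IsFiniteMeasure P] {X : Ω → ℝ} (hX : Measurable X) (h : IsGumbel P X 0 1) :
    P.map X = gumbelMeasure := by
  refine Measure.ext_of_Iic _ _ fun g => ?_
  rw [Measure.map_apply hX measurableSet_Iic, gumbelMeasure_Iic]
  simpa [preimage] using h g

theorem measurableSet_setOf_mem_and_lt_add {X ι : Type*} [MeasurableSpace X] [Countable ι]
    {f : X → ℝ} {g : ι → X → ℝ} (hf : Measurable f) (hg : ∀ j, Measurable (g j)) {A : Set ℝ}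
    (hA : MeasurableSet A) (c : ι → ℝ) :
    MeasurableSet {x | f x ∈ A ∧ ∀ j, g j x < f x + c j} := by
  simp only [ofPred_and, ofPred_forall]
  exact (hf hA).inter (.iInter fun j => measurableSet_lt (hg j) (hf.add_const _))

theorem MeasureTheory.Measure.pi_setOf_mem_and_succAbove_lt_add {k : ℕ}
    (μ : Fin (k + 1) → Measure ℝ) [∀ j, SigmaFinite (μ j)] (i : Fin (k + 1)) {A : Set ℝ} (hA : MeasurableSet A)
    (c : Fin k → ℝ) :
    Measure.pi μ {x | x i ∈ A ∧ ∀ j, x (i.succAbove j) < x i + c j} =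
      ∫⁻ t in A, ∏ j, μ (i.succAbove j) (Iio (t + c j)) ∂μ i := by
  set T : Set (ℝ × (Fin k → ℝ)) := {p | p.1 ∈ A ∧ ∀ j, p.2 j < p.1 + c j}
  have hT : MeasurableSet T :=
    measurableSet_setOf_mem_and_lt_add measurable_fst (fun j => by fun_prop) hA c
  have hpre : {x : Fin (k + 1) → ℝ | x i ∈ A ∧ ∀ j, x (i.succAbove j) < x i + c j} =
      MeasurableEquiv.piFinSuccAbove (fun _ => ℝ) i ⁻¹' T := rfl
  rw [hpre, (measurePreserving_piFinSuccAbove μ i).measure_preimage hT.nullMeasurableSet,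
    Measure.prod_apply hT, ← lintegral_indicator hA]
  congr! with t
  by_cases ht : t ∈ A
  · have : Prod.mk t ⁻¹' T = univ.pi fun j => Iio (t + c j) := by ext y; simp [T, ht]
    rw [this, Measure.pi_pi, indicator_of_mem ht]
  · have : Prod.mk t ⁻¹' T = ∅ := by ext y; simp [T, ht]
    rw [this, measure_empty, indicator_of_notMem ht]

theorem lintegral_Iic_prod_gumbelMeasure_Iio {ι : Type*} [Fintype ι] (c : ι → ℝ) (a : ℝ) :
    ∫⁻ t in Iic a, ∏ j, gumbelMeasure (Iio (t + c j)) ∂gumbelMeasure =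
      ENNReal.ofReal ((1 + ∑ j, exp (-c j))⁻¹ * exp (-((1 + ∑ j, exp (-c j)) * exp (-a)))) := by
  set D := ∑ j, exp (-c j)
  have hprod (t : ℝ) :
      ∏ j, gumbelMeasure (Iio (t + c j)) = ENNReal.ofReal (exp (-(D * exp (-t)))) := by
    simp_rw [gumbelMeasure_Iio, ← ENNReal.ofReal_prod_of_nonneg fun _ _ => (exp_pos _).le,
      ← exp_sum, D, Finset.sum_mul, ← Finset.sum_neg_distrib, ← exp_add, neg_add_rev]
  have hdens (t : ℝ) : ENNReal.ofReal (gumbelPDF t) * ENNReal.ofReal (exp (-(D * exp (-t)))) =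
      ENNReal.ofReal (exp (-t) * exp (-((1 + D) * exp (-t)))) := by
    rw [← ENNReal.ofReal_mul (by unfold gumbelPDF; positivity), gumbelPDF, mul_assoc, ← exp_add]
    ring_nf
  simp_rw [hprod]
  rw [gumbelMeasure, setLIntegral_withDensity_eq_setLIntegral_mul _
    (by unfold gumbelPDF; fun_prop) (by fun_prop) measurableSet_Iic]
  simp_rw [Pi.mul_apply, hdens]
  exact lintegral_Iic_exp_neg_mul_exp_neg_mul_exp_neg (by positivity) a

theorem forall_ne_lt_and_iSup_le_iff {ι α : Type*} [Finite ι]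
    [ConditionallyCompleteLinearOrder α] (y : ι → α) (i : ι) (m : α) :
    ((∀ j, j ≠ i → y j < y i) ∧ ⨆ k, y k ≤ m) ↔ ((∀ j, j ≠ i → y j < y i) ∧ y i ≤ m) := by
  have : Nonempty ι := ⟨i⟩
  rw [ciSup_le_iff (Set.finite_range y).bddAbove]
  refine and_congr_right fun hmax => ⟨fun h => h i, fun h k => ?_⟩
  rcases eq_or_ne k i with rfl | hk
  exacts [h, (hmax k hk).le.trans h]

theorem one_add_sum_exp_sub_succAbove {k : ℕ} (s : Fin (k + 1) → ℝ) (i : Fin (k + 1)) :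
    1 + ∑ j, exp (-(s i - s (i.succAbove j))) = (∑ j, exp (s j)) / exp (s i) := by
  simp only [neg_sub, exp_sub]
  rw [Fin.sum_univ_succAbove _ i, add_div, div_self (exp_pos _).ne', Finset.sum_div]

theorem gumbel_argmax_indep_max_general {Ω : Type*} [MeasurableSpace Ω] (P : Measure Ω)
    [IsProbabilityMeasure P] (n : ℕ) (s : Fin n → ℝ)
    (ε : Fin n → Ω → ℝ) (hmeas : ∀ i, Measurable (ε i))
    (hindep : ProbabilityTheory.iIndepFun ε P)
    (hgumbel : ∀ i, IsGumbel P (ε i) 0 1) (i : Fin n) (m : ℝ) :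
    P {ω | (∀ j, j ≠ i → s j + ε j ω < s i + ε i ω) ∧ (⨆ k, (s k + ε k ω)) ≤ m} =
      ENNReal.ofReal (Real.exp (s i) / ∑ j, Real.exp (s j)) *
        ENNReal.ofReal
          (Real.exp (-Real.exp (-(m - Real.log (∑ j, Real.exp (s j)))))) := by
  obtain ⟨k, rfl⟩ : ∃ k, n = k + 1 := Nat.exists_eq_succ_of_ne_zero i.pos.ne'
  set c : Fin k → ℝ := fun j => s i - s (i.succAbove j)
  set S := {x : Fin (k + 1) → ℝ | x i ∈ Iic (m - s i) ∧ ∀ j, x (i.succAbove j) < x i + c j}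
  have hS : MeasurableSet S := measurableSet_setOf_mem_and_lt_add (measurable_pi_apply i)
    (fun j => measurable_pi_apply _) measurableSet_Iic c
  have hlaw : P.map (fun ω j => ε j ω) = Measure.pi fun _ => gumbelMeasure := by
    rw [hindep.map_fun_eq_pi_map fun j => (hmeas j).aemeasurable]
    exact congrArg _ (funext fun j => (hgumbel j).map_eq_gumbelMeasure (hmeas j))
  have hevent : {ω | (∀ j, j ≠ i → s j + ε j ω < s i + ε i ω) ∧ (⨆ k, (s k + ε k ω)) ≤ m} =
      (fun ω j => ε j ω) ⁻¹' S := by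
    ext ω
    rw [mem_ofPred_eq, forall_ne_lt_and_iSup_le_iff (fun k => s k + ε k ω)]
    simp only [Fin.forall_iff_succAbove i, ne_eq, not_true, false_imp_iff, Fin.succAbove_ne,
      not_false_iff, forall_const, true_and, mem_preimage, S, c, mem_Iic]
    constructor <;> rintro ⟨h₁, h₂⟩
    exacts [⟨by linarith, fun j => by linarith [h₁ j]⟩, ⟨fun j => by linarith [h₂ j], by linarith⟩]
  have hZ : 0 < ∑ j, exp (s j) := Finset.sum_pos (fun j _ => exp_pos _) ⟨i, Finset.mem_univ i⟩
  rw [hevent, ← Measure.map_apply (measurable_pi_lambda _ hmeas) hS, hlaw,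
    Measure.pi_setOf_mem_and_succAbove_lt_add _ i measurableSet_Iic,
    lintegral_Iic_prod_gumbelMeasure_Iio, one_add_sum_exp_sub_succAbove,
    ← ENNReal.ofReal_mul (by positivity),
    inv_div, neg_sub, neg_sub, exp_sub, exp_sub, exp_log hZ]
  field_simp

theorem gumbel_argmax_indep_max {Ω : Type*} [MeasurableSpace Ω] (P : Measure Ω)
    [IsProbabilityMeasure P] (n : ℕ) (hn : 0 < n) (s : Fin n → ℝ)
    (ε : Fin n → Ω → ℝ) (hmeas : ∀ i, Measurable (ε i))
    (hindep : ProbabilityTheory.iIndepFun ε P)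
    (hgumbel : ∀ i, IsGumbel P (ε i) 0 1) (i : Fin n) (m : ℝ) :
    P {ω | (∀ j, j ≠ i → s j + ε j ω < s i + ε i ω) ∧ (⨆ k, (s k + ε k ω)) ≤ m} =
      ENNReal.ofReal (Real.exp (s i) / ∑ j, Real.exp (s j)) *
        ENNReal.ofReal
          (Real.exp (-Real.exp (-(m - Real.log (∑ j, Real.exp (s j)))))) :=
  gumbel_argmax_indep_max_general P n s ε hmeas hindep hgumbel i m
end
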